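/- Binary search correctness, upper side: in a precise game where the advantaged player's unique equilibrium strategy has length ℓ, there is no probability vector S of length ℓ+1 (i.e., with (S)_ℓ ≠ 0, supported on {0,…,ℓ}) such that (M_A S)_i is constant for all 0 ≤ i ≤ ℓ. -/
import Mathlib


/-- A mixed strategy: a probability vector. -/
def IsProbVec {n : ℕ} (S : Fin n → ℝ) : Prop :=
  (∀ i, 0 ≤ S i) ∧ ∑ i, S i = 1

/-- Player A's expected payoff `S_Bᵀ M_A S_A`. -/
def payoff {m n : ℕ} (M : Matrix (Fin m) (Fin n) ℝ)
    (SA : Fin n → ℝ) (SB : Fin m → ℝ) : ℝ :=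
  ∑ i, SB i * (M.mulVec SA) i

/-- Nash equilibrium of the zero-sum game with payoff matrix `M` for player A
(A maximizes, B minimizes A's payoff). -/
def IsNash {m n : ℕ} (M : Matrix (Fin m) (Fin n) ℝ)
    (SA : Fin n → ℝ) (SB : Fin m → ℝ) : Prop :=
  IsProbVec SA ∧ IsProbVec SB ∧
    (∀ T, IsProbVec T → payoff M T SB ≤ payoff M SA SB) ∧
    (∀ T, IsProbVec T → payoff M SA SB ≤ payoff M SA T)

/-- Precision, expressed on the diagonal values `α` of the Toeplitz payoff
matrix of the player with advantage: winning the bid by one fewer chip is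
strictly better, and losing by one more chip is strictly better. -/
def Precise (α : ℤ → ℝ) : Prop :=
  (∀ i j : ℤ, 0 ≤ i → i < j → α j < α i) ∧
  (∀ i j : ℤ, i < j → j < 0 → α j < α i)

/-! ### Auxiliary machinery -/

/-- extend a Fin-vector to ℕ by 0. -/
def extv {n : ℕ} (X : Fin (n+1) → ℝ) : ℕ → ℝ := fun k => if h : k < n+1 then X ⟨k, h⟩ else 0

lemma extv_apply {n : ℕ} (X : Fin (n+1) → ℝ) (i : Fin (n+1)) : extv X (i : ℕ) = X i := by
  simp [extv, i.isLt]

lemma extv_mk {n : ℕ} (X : Fin (n+1) → ℝ) (k : ℕ) (h : k < n+1) : extv X k = X ⟨k, h⟩ :=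
  dif_pos h

lemma extv_zero {n : ℕ} (X : Fin (n+1) → ℝ) (k : ℕ) (h : n+1 ≤ k) : extv X k = 0 :=
  dif_neg (by omega)

lemma extv_nonneg {n : ℕ} (X : Fin (n+1) → ℝ) (hX : ∀ i, 0 ≤ X i) (k : ℕ) : 0 ≤ extv X k := by
  unfold extv; split
  · exact hX _
  · exact le_refl 0

lemma sum_extv {n : ℕ} (X : Fin (n+1) → ℝ) (g : ℕ → ℝ) :
    ∑ i, X i * g i = ∑ k ∈ Finset.range (n+1), extv X k * g k := by
  rw [← Fin.sum_univ_eq_sum_range (fun k => extv X k * g k)]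
  exact Finset.sum_congr rfl fun i _ => by rw [extv_apply]

lemma sum_extv' {n : ℕ} (X : Fin (n+1) → ℝ) :
    ∑ i, X i = ∑ k ∈ Finset.range (n+1), extv X k := by
  rw [← Fin.sum_univ_eq_sum_range (fun k => extv X k)]
  exact Finset.sum_congr rfl fun i _ => by rw [extv_apply]

lemma sum_range_ext (e : ℕ → ℝ) (L N N' : ℕ) (he : ∀ k, L ≤ k → e k = 0)
    (hN : L ≤ N) (hN' : L ≤ N') :
    ∑ k ∈ Finset.range N, e k = ∑ k ∈ Finset.range N', e k := by
  have h1 : ∀ m, L ≤ m → ∑ k ∈ Finset.range m, e k = ∑ k ∈ Finset.range L, e k := by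
    intro m hm
    symm
    apply Finset.sum_subset (Finset.range_subset_range.mpr hm)
    intro x _ hx
    exact he x (by simp [Finset.mem_range] at hx; omega)
  rw [h1 N hN, h1 N' hN']

lemma sum_reflect (f : ℕ → ℝ) (N : ℕ) :
    ∑ n ∈ Finset.range (N+1), f (N - n) = ∑ n ∈ Finset.range (N+1), f n := by
  have h := Finset.sum_range_reflect f (N+1)
  rw [← h]
  exact Finset.sum_congr rfl fun n _ => rfl

lemma payoff_swap {m n : ℕ} (M : Matrix (Fin m) (Fin n) ℝ) (X : Fin n → ℝ) (T : Fin m → ℝ) :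
    payoff M X T = ∑ j, X j * (∑ i, T i * M i j) := by
  unfold payoff Matrix.mulVec dotProduct
  simp only [Finset.mul_sum]
  rw [Finset.sum_comm]
  exact Finset.sum_congr rfl fun j _ => Finset.sum_congr rfl fun i _ => by ring

def purev {n : ℕ} (i : Fin n) : Fin n → ℝ := fun j => if j = i then 1 else 0

lemma purev_prob {n : ℕ} (i : Fin n) : IsProbVec (purev i) := by
  constructor
  · intro j; unfold purev; split <;> norm_num
  · simp [purev]

lemma payoff_purev {m n : ℕ} (M : Matrix (Fin m) (Fin n) ℝ) (X : Fin n → ℝ) (i : Fin m) :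
    payoff M X (purev i) = M.mulVec X i := by
  unfold payoff purev
  simp [ite_mul]

lemma mulVec_ext {a b : ℕ} (α : ℤ → ℝ) (M : Matrix (Fin (b+1)) (Fin (a+1)) ℝ)
    (hM : ∀ (i : Fin (b + 1)) (j : Fin (a + 1)), M i j = α ((j : ℤ) - (i : ℤ)))
    (X : Fin (a+1) → ℝ) (i : Fin (b+1)) :
    M.mulVec X i = ∑ k ∈ Finset.range (a+1), extv X k * α ((k : ℤ) - ((i : ℕ) : ℤ)) := by
  have h1 : M.mulVec X i = ∑ j, X j * α (((j:ℕ) : ℤ) - ((i:ℕ) : ℤ)) := by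
    unfold Matrix.mulVec dotProduct
    exact Finset.sum_congr rfl fun j _ => by show M i j * X j = _; rw [hM]; ring
  rw [h1, sum_extv X (fun k => α ((k : ℤ) - ((i : ℕ) : ℤ)))]

/-- The reversal of `S` (supported on `{0,…,ℓ}`), shifted up by `t`, as a strategy for B. -/
def revS (ℓ t : ℕ) {a b : ℕ} (S : Fin (a+1) → ℝ) : Fin (b+1) → ℝ :=
  fun i => if t ≤ (i:ℕ) ∧ (i:ℕ) ≤ ℓ + t then extv S (ℓ + t - (i:ℕ)) else 0

lemma revS_nonneg (ℓ t : ℕ) {a b : ℕ} (S : Fin (a+1) → ℝ) (hS : ∀ i, 0 ≤ S i) :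
    ∀ i : Fin (b+1), 0 ≤ revS ℓ t S i := by
  intro i; unfold revS; split
  · exact extv_nonneg S hS _
  · exact le_refl 0

lemma revS_sum_aux (ℓ t : ℕ) {a b : ℕ} (S : Fin (a+1) → ℝ)
    (hsupp : ∀ k, ℓ + 1 ≤ k → extv S k = 0) (ht : ℓ + t ≤ b) (g : ℕ → ℝ) :
    ∑ i : Fin (b+1), revS ℓ t S i * g (i : ℕ)
      = ∑ n ∈ Finset.range (ℓ+t+1), extv S (ℓ + t - n) * g n := by
  have h1 : ∑ i : Fin (b+1), revS ℓ t S i * g (i : ℕ)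
      = ∑ n ∈ Finset.range (b+1),
          (if t ≤ n ∧ n ≤ ℓ + t then extv S (ℓ + t - n) else 0) * g n := by
    rw [← Fin.sum_univ_eq_sum_range (fun n => (if t ≤ n ∧ n ≤ ℓ + t then extv S (ℓ + t - n) else 0) * g n)]
    exact Finset.sum_congr rfl fun i _ => rfl
  rw [h1]
  rw [← Finset.sum_subset (Finset.range_subset_range.mpr (by omega : ℓ + t + 1 ≤ b + 1))]
  · apply Finset.sum_congr rfl
    intro n hn
    have hn' : n ≤ ℓ + t := by simp [Finset.mem_range] at hn; omega
    by_cases h : t ≤ n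
    · rw [if_pos ⟨h, hn'⟩]
    · rw [if_neg (by omega), hsupp (ℓ + t - n) (by omega), zero_mul]
  · intro x _ hx
    have : ℓ + t < x := by simp [Finset.mem_range] at hx; omega
    rw [if_neg (by omega), zero_mul]

lemma revS_sum (ℓ t : ℕ) {a b : ℕ} (S : Fin (a+1) → ℝ) (hℓa : ℓ ≤ a)
    (hsupp : ∀ k, ℓ + 1 ≤ k → extv S k = 0) (ht : ℓ + t ≤ b) (hsum : ∑ i, S i = 1) :
    ∑ i : Fin (b+1), revS ℓ t S i = 1 := by
  calc ∑ i : Fin (b+1), revS ℓ t S i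
      = ∑ i : Fin (b+1), revS ℓ t S i * (fun _ : ℕ => (1:ℝ)) (i:ℕ) :=
        Finset.sum_congr rfl fun i _ => by ring
    _ = ∑ n ∈ Finset.range (ℓ+t+1), extv S (ℓ + t - n) * (fun _ : ℕ => (1:ℝ)) n :=
        revS_sum_aux ℓ t S hsupp ht (fun _ : ℕ => (1:ℝ))
    _ = ∑ n ∈ Finset.range (ℓ+t+1), (fun m => extv S m) (ℓ + t - n) :=
        Finset.sum_congr rfl fun n _ => by simp
    _ = ∑ n ∈ Finset.range (ℓ+t+1), extv S n := sum_reflect (fun m => extv S m) (ℓ + t)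
    _ = ∑ n ∈ Finset.range (a+1), extv S n :=
        sum_range_ext (fun m => extv S m) (ℓ+1) (ℓ+t+1) (a+1) hsupp (by omega) (by omega)
    _ = 1 := by rw [← sum_extv' S, hsum]

lemma revS_col (ℓ t : ℕ) {a b : ℕ} (α : ℤ → ℝ) (M : Matrix (Fin (b+1)) (Fin (a+1)) ℝ)
    (hM : ∀ (i : Fin (b + 1)) (j : Fin (a + 1)), M i j = α ((j : ℤ) - (i : ℤ)))
    (S : Fin (a+1) → ℝ) (hℓa : ℓ ≤ a)
    (hsupp : ∀ k, ℓ + 1 ≤ k → extv S k = 0) (ht : ℓ + t ≤ b)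
    (j : Fin (a+1)) (hj : (j:ℕ) ≤ ℓ + t) :
    ∑ i, revS ℓ t S i * M i j = M.mulVec S ⟨ℓ + t - (j:ℕ), by omega⟩ := by
  calc ∑ i, revS ℓ t S i * M i j
      = ∑ i : Fin (b+1), revS ℓ t S i * (fun n : ℕ => α (((j:ℕ):ℤ) - (n:ℤ))) (i:ℕ) :=
        Finset.sum_congr rfl fun i _ => by rw [hM]
    _ = ∑ n ∈ Finset.range (ℓ+t+1), extv S (ℓ + t - n) * (fun n : ℕ => α (((j:ℕ):ℤ) - (n:ℤ))) n :=
        revS_sum_aux ℓ t S hsupp ht (fun n : ℕ => α (((j:ℕ):ℤ) - (n:ℤ)))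
    _ = ∑ n ∈ Finset.range (ℓ+t+1),
          (fun m => extv S m * α (((j:ℕ):ℤ) - (ℓ:ℤ) - (t:ℤ) + (m:ℤ))) (ℓ + t - n) := by
        apply Finset.sum_congr rfl
        intro n hn
        have hn' : n ≤ ℓ + t := by simp [Finset.mem_range] at hn; omega
        show extv S (ℓ + t - n) * α (((j:ℕ):ℤ) - (n:ℤ))
          = extv S (ℓ + t - n) * α (((j:ℕ):ℤ) - (ℓ:ℤ) - (t:ℤ) + ((ℓ + t - n : ℕ):ℤ))
        have harg : (((j:ℕ):ℤ) - (n:ℤ)) = ((j:ℕ):ℤ) - (ℓ:ℤ) - (t:ℤ) + ((ℓ + t - n : ℕ):ℤ) := by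
          omega
        rw [harg]
    _ = ∑ n ∈ Finset.range (ℓ+t+1), extv S n * α (((j:ℕ):ℤ) - (ℓ:ℤ) - (t:ℤ) + (n:ℤ)) :=
        sum_reflect (fun m => extv S m * α (((j:ℕ):ℤ) - (ℓ:ℤ) - (t:ℤ) + (m:ℤ))) (ℓ + t)
    _ = ∑ n ∈ Finset.range (a+1), extv S n * α (((j:ℕ):ℤ) - (ℓ:ℤ) - (t:ℤ) + (n:ℤ)) :=
        sum_range_ext (fun m => extv S m * α (((j:ℕ):ℤ) - (ℓ:ℤ) - (t:ℤ) + (m:ℤ))) (ℓ+1) (ℓ+t+1) (a+1)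
          (fun k hk => by show extv S k * _ = 0; rw [hsupp k hk, zero_mul]) (by omega) (by omega)
    _ = M.mulVec S ⟨ℓ + t - (j:ℕ), by omega⟩ := by
        rw [mulVec_ext α M hM S ⟨ℓ + t - (j:ℕ), by omega⟩]
        apply Finset.sum_congr rfl
        intro n _
        have hval : ((⟨ℓ + t - (j:ℕ), by omega⟩ : Fin (b+1)) : ℕ) = ℓ + t - (j:ℕ) := rfl
        have harg : (((j:ℕ):ℤ) - (ℓ:ℤ) - (t:ℤ) + (n:ℤ))
            = (n:ℤ) - ((ℓ + t - (j:ℕ) : ℕ):ℤ) := by omega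
        rw [hval, harg]

/-- rows of `M·X` strictly increase past the support of `X`. -/
lemma row_mono {a b : ℕ} (α : ℤ → ℝ) (hprec : Precise α)
    (M : Matrix (Fin (b+1)) (Fin (a+1)) ℝ)
    (hM : ∀ (i : Fin (b + 1)) (j : Fin (a + 1)), M i j = α ((j : ℤ) - (i : ℤ)))
    (X : Fin (a+1) → ℝ) (hXnn : ∀ k, 0 ≤ X k) (L : ℕ) (hLa : L < a+1)
    (hsupp : ∀ k, L + 1 ≤ k → extv X k = 0) (hXL : extv X L ≠ 0)
    (i : ℕ) (hi2 : L + 2 ≤ i) (hib : i < b+1) :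
    M.mulVec X ⟨i-1, by omega⟩ < M.mulVec X ⟨i, hib⟩ := by
  rw [mulVec_ext α M hM, mulVec_ext α M hM]
  have hv1 : ((⟨i-1, by omega⟩ : Fin (b+1)) : ℕ) = i - 1 := rfl
  have hv2 : ((⟨i, hib⟩ : Fin (b+1)) : ℕ) = i := rfl
  rw [hv1, hv2]
  apply Finset.sum_lt_sum
  · intro k _
    by_cases h0 : extv X k = 0
    · rw [h0, zero_mul, zero_mul]
    · have hkL : k ≤ L := by by_contra h; exact h0 (hsupp k (by omega))
      have hα : α ((k:ℤ) - ((i-1 : ℕ):ℤ)) < α ((k:ℤ) - (i:ℤ)) := by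
        apply hprec.2 _ _ (by omega) (by omega)
      exact mul_le_mul_of_nonneg_left (le_of_lt hα) (extv_nonneg X hXnn k)
  · refine ⟨L, Finset.mem_range.mpr hLa, ?_⟩
    have hpos : 0 < extv X L := lt_of_le_of_ne (extv_nonneg X hXnn L) (Ne.symm hXL)
    have hα : α ((L:ℤ) - ((i-1 : ℕ):ℤ)) < α ((L:ℤ) - (i:ℤ)) := by
      apply hprec.2 _ _ (by omega) (by omega)
    exact mul_lt_mul_of_pos_left hα hpos

lemma shift_sum {a : ℕ} (SA : Fin (a+1) → ℝ) (h0 : SA 0 = 0) :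
    ∑ j : Fin (a+1), extv SA ((j:ℕ)+1) = ∑ j, SA j := by
  have h1 : ∑ j : Fin (a+1), extv SA ((j:ℕ)+1) = ∑ n ∈ Finset.range (a+1), extv SA (n+1) :=
    Fin.sum_univ_eq_sum_range (fun n => extv SA (n+1)) (a+1)
  have h2 := Finset.sum_range_succ' (fun n => extv SA n) (a+1)
  have h3 := Finset.sum_range_succ (fun n => extv SA n) (a+1)
  have h4 : extv SA (a+1) = 0 := extv_zero SA (a+1) (le_refl _)
  have h5 : extv SA 0 = SA 0 := by
    rw [extv_mk SA 0 (by omega)]; congr 1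
  rw [h1, sum_extv' SA]
  rw [h4, add_zero] at h3
  rw [h5, h0, add_zero] at h2
  rw [← h2, h3]

lemma shift_mulVec {a b : ℕ} (α : ℤ → ℝ) (M : Matrix (Fin (b+1)) (Fin (a+1)) ℝ)
    (hM : ∀ (i : Fin (b + 1)) (j : Fin (a + 1)), M i j = α ((j : ℤ) - (i : ℤ)))
    (SA : Fin (a+1) → ℝ) (h0 : SA 0 = 0) (i : Fin (b+1)) :
    M.mulVec (fun j => extv SA ((j:ℕ)+1)) i
      = ∑ n ∈ Finset.range (a+2), extv SA n * α ((n:ℤ) - 1 - ((i:ℕ):ℤ)) := by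
  rw [mulVec_ext α M hM]
  have h1 : ∀ k ∈ Finset.range (a+1),
      extv (fun j : Fin (a+1) => extv SA ((j:ℕ)+1)) k * α ((k:ℤ) - ((i:ℕ):ℤ))
        = extv SA (k+1) * α ((k:ℤ) - ((i:ℕ):ℤ)) := by
    intro k hk
    have hk' : k < a+1 := Finset.mem_range.mp hk
    rw [extv_mk _ k hk']
  rw [Finset.sum_congr rfl h1]
  have h2 := Finset.sum_range_succ' (fun n => extv SA n * α ((n:ℤ) - 1 - ((i:ℕ):ℤ))) (a+1)
  have h5 : extv SA 0 = SA 0 := by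
    rw [extv_mk SA 0 (by omega)]; congr 1
  rw [h5, h0, zero_mul, add_zero] at h2
  rw [h2]
  apply Finset.sum_congr rfl
  intro n _
  have harg : ((n:ℤ) - ((i:ℕ):ℤ)) = ((n+1 : ℕ):ℤ) - 1 - ((i:ℕ):ℤ) := by push_cast; ring
  rw [harg]

/-- binary search, upper side: in a precise all-pay bidding game
where the advantaged player A's unique equilibrium strategy has length `ℓ`,
there is no probability vector `S` of length `ℓ + 1` (i.e. with `S_ℓ ≠ 0`,
supported on `{0, …, ℓ}`) such that `(M_A S)_i` is constant for all
`0 ≤ i ≤ ℓ`. -/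
theorem stmt_18 (a b : ℕ) (α : ℤ → ℝ) (hprec : Precise α)
    (M : Matrix (Fin (b + 1)) (Fin (a + 1)) ℝ)
    (hM : ∀ (i : Fin (b + 1)) (j : Fin (a + 1)), M i j = α ((j : ℤ) - (i : ℤ)))
    (SA : Fin (a + 1) → ℝ) (SB : Fin (b + 1) → ℝ)
    (hNash : IsNash M SA SB)
    (ℓ : ℕ) (hℓ1 : 1 ≤ ℓ) (hℓa : ℓ ≤ a) (hℓb : ℓ ≤ b)
    -- `S_A` has length `ℓ`:
    (hlen : SA ⟨ℓ - 1, by omega⟩ ≠ 0)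
    (hzero : ∀ m : Fin (a + 1), ℓ ≤ (m : ℕ) → SA m = 0)
    -- uniqueness of A's equilibrium strategy (may be assumed):
    (huniq : ∀ (SA' : Fin (a + 1) → ℝ) (SB' : Fin (b + 1) → ℝ),
      IsNash M SA' SB' → SA' = SA) :
    ¬ ∃ S : Fin (a + 1) → ℝ, IsProbVec S ∧
        S ⟨ℓ, by omega⟩ ≠ 0 ∧
        (∀ m : Fin (a + 1), ℓ < (m : ℕ) → S m = 0) ∧
        ∃ v : ℝ, ∀ i : Fin (b + 1), (i : ℕ) ≤ ℓ → (M.mulVec S) i = v := by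
  rintro ⟨S, ⟨hSnn, hSsum⟩, hSl, hSsupp, v, hv⟩
  obtain ⟨⟨hSAnn, hSAsum⟩, ⟨hSBnn, hSBsum⟩, hAopt, hBopt⟩ := hNash
  have hmv := mulVec_ext α M hM
  have hextS0 : ∀ k, ℓ + 1 ≤ k → extv S k = 0 := by
    intro k hk
    by_cases h : k < a + 1
    · rw [extv_mk S k h]
      exact hSsupp ⟨k, h⟩ ((by omega : ℓ < k))
    · exact dif_neg h
  have hextSA0 : ∀ k, ℓ ≤ k → extv SA k = 0 := by
    intro k hk
    by_cases h : k < a + 1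
    · rw [extv_mk SA k h]
      exact hzero ⟨k, h⟩ ((by omega : ℓ ≤ k))
    · exact dif_neg h
  have hrowge : ∀ i : Fin (b+1), payoff M SA SB ≤ M.mulVec SA i := by
    intro i
    have h := hBopt (purev i) (purev_prob i)
    rwa [payoff_purev] at h
  -- Step 1: SA 0 ≠ 0
  have hSA0 : SA 0 ≠ 0 := by
    intro h0
    set SA' : Fin (a+1) → ℝ := fun j => extv SA ((j:ℕ)+1) with hSA'def
    have hSA'nn : ∀ j, 0 ≤ SA' j := fun j => extv_nonneg SA hSAnn _
    have hSA'sum : ∑ j, SA' j = 1 := by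
      simp only [hSA'def]
      rw [shift_sum SA h0, hSAsum]
    have hSA'row : ∀ i : Fin (b+1), payoff M SA SB ≤ M.mulVec SA' i := by
      intro i
      have hbase : M.mulVec SA' i
          = ∑ n ∈ Finset.range (a+2), extv SA n * α ((n:ℤ) - 1 - ((i:ℕ):ℤ)) := by
        simp only [hSA'def]
        exact shift_mulVec α M hM SA h0 i
      rcases Nat.lt_or_ge (i:ℕ) b with hib | hib
      · have h2 : M.mulVec SA' i = M.mulVec SA ⟨(i:ℕ)+1, by omega⟩ := by
          rw [hbase, hmv SA ⟨(i:ℕ)+1, by omega⟩]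
          rw [sum_range_ext (fun n => extv SA n * α ((n:ℤ) - 1 - ((i:ℕ):ℤ))) ℓ (a+2) (a+1)
              (fun k hk => by show extv SA k * _ = 0; rw [hextSA0 k hk, zero_mul])
              (by omega) (by omega)]
          apply Finset.sum_congr rfl
          intro n _
          congr 2
          show ((n:ℤ) - 1 - ((i:ℕ):ℤ)) = (n:ℤ) - (((i:ℕ)+1 : ℕ):ℤ)
          push_cast
          ring
        rw [h2]
        exact hrowge _
      · have h3 : M.mulVec SA i
            = ∑ n ∈ Finset.range (a+2), extv SA n * α ((n:ℤ) - ((i:ℕ):ℤ)) := by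
          rw [hmv SA i]
          exact sum_range_ext (fun n => extv SA n * α ((n:ℤ) - ((i:ℕ):ℤ))) ℓ (a+1) (a+2)
              (fun k hk => by show extv SA k * _ = 0; rw [hextSA0 k hk, zero_mul])
              (by omega) (by omega)
        have h4 : M.mulVec SA i ≤ M.mulVec SA' i := by
          rw [h3, hbase]
          apply Finset.sum_le_sum
          intro n _
          by_cases hz : extv SA n = 0
          · rw [hz, zero_mul, zero_mul]
          · have hn : n < ℓ := by by_contra hc; exact hz (hextSA0 n (by omega))
            have hα : α ((n:ℤ) - ((i:ℕ):ℤ)) < α ((n:ℤ) - 1 - ((i:ℕ):ℤ)) :=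
              hprec.2 _ _ (by omega) (by omega)
            exact mul_le_mul_of_nonneg_left (le_of_lt hα) (extv_nonneg SA hSAnn n)
        exact le_trans (hrowge i) h4
    have hpay' : ∀ T : Fin (b+1) → ℝ, IsProbVec T → payoff M SA SB ≤ payoff M SA' T := by
      intro T hT
      calc payoff M SA SB = ∑ i, T i * payoff M SA SB := by
            rw [← Finset.sum_mul, hT.2, one_mul]
        _ ≤ ∑ i, T i * M.mulVec SA' i :=
            Finset.sum_le_sum fun i _ => mul_le_mul_of_nonneg_left (hSA'row i) (hT.1 i)
        _ = payoff M SA' T := rfl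
    have hnash' : IsNash M SA' SB := by
      refine ⟨⟨hSA'nn, hSA'sum⟩, ⟨hSBnn, hSBsum⟩, ?_, ?_⟩
      · intro T hT
        exact le_trans (hAopt T hT) (hpay' SB ⟨hSBnn, hSBsum⟩)
      · intro T hT
        exact le_trans (hAopt SA' ⟨hSA'nn, hSA'sum⟩) (hpay' T hT)
    have heq := huniq SA' SB hnash'
    have hall : ∀ n, ∀ h : n < a + 1, SA ⟨n, h⟩ = 0 := by
      intro n
      induction n with
      | zero =>
        intro h
        rw [show (⟨0, h⟩ : Fin (a+1)) = 0 from by ext; simp]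
        exact h0
      | succ m ih =>
        intro h
        have h' : m < a + 1 := by omega
        calc SA ⟨m+1, h⟩ = extv SA (m+1) := (extv_mk SA (m+1) h).symm
          _ = SA' ⟨m, h'⟩ := rfl
          _ = SA ⟨m, h'⟩ := by rw [heq]
          _ = 0 := ih h'
    have hcontra : (1:ℝ) = 0 := by
      rw [← hSAsum]
      apply Finset.sum_eq_zero
      intro i _
      have := hall (i:ℕ) i.isLt
      simpa using this
    norm_num at hcontra
  -- v ≥ value
  have hR0prob : IsProbVec (revS ℓ 0 S : Fin (b+1) → ℝ) :=
    ⟨revS_nonneg ℓ 0 S hSnn, revS_sum ℓ 0 S hℓa hextS0 (by omega) hSsum⟩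
  have hvge : payoff M SA SB ≤ v := by
    have h1 := hBopt _ hR0prob
    have h2 : payoff M SA (revS ℓ 0 S) = v := by
      rw [payoff_swap]
      have h3 : ∀ j : Fin (a+1), SA j * (∑ i, revS ℓ 0 S i * M i j) = SA j * v := by
        intro j
        by_cases hj : SA j = 0
        · rw [hj, zero_mul, zero_mul]
        · have hjl : (j:ℕ) < ℓ := by by_contra hc; exact hj (hzero j (by omega))
          rw [revS_col ℓ 0 α M hM S hℓa hextS0 (by omega) j (by omega)]
          have h8 := hv ⟨ℓ + 0 - (j:ℕ), by omega⟩ ((by omega : ℓ + 0 - (j:ℕ) ≤ ℓ))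
          rw [h8]
      rw [Finset.sum_congr rfl (fun j _ => h3 j), ← Finset.sum_mul, hSAsum, one_mul]
    linarith
  -- SB is supported on {0,…,ℓ}
  have hSBsupp : ∀ i : Fin (b+1), ℓ < (i:ℕ) → SB i = 0 := by
    intro i hi
    by_contra hne
    have hpos : 0 < SB i := lt_of_le_of_ne (hSBnn i) (Ne.symm hne)
    have hstep : M.mulVec SA ⟨(i:ℕ)-1, by omega⟩ < M.mulVec SA ⟨(i:ℕ), i.isLt⟩ :=
      row_mono α hprec M hM SA hSAnn (ℓ-1) (by omega)
        (fun k hk => hextSA0 k (by omega))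
        (by rw [extv_mk SA (ℓ-1) (by omega)]; exact hlen)
        (i:ℕ) (by omega) i.isLt
    have hstep' : M.mulVec SA ⟨(i:ℕ)-1, by omega⟩ < M.mulVec SA i := hstep
    have h2 : payoff M SA SB < M.mulVec SA i := by
      have h5 := hrowge ⟨(i:ℕ)-1, by omega⟩
      linarith
    have hlt : ∑ i', SB i' * payoff M SA SB < ∑ i', SB i' * M.mulVec SA i' := by
      apply Finset.sum_lt_sum
      · intro k _
        exact mul_le_mul_of_nonneg_left (hrowge k) (hSBnn k)
      · exact ⟨i, Finset.mem_univ i, mul_lt_mul_of_pos_left h2 hpos⟩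
    rw [← Finset.sum_mul, hSBsum, one_mul] at hlt
    exact lt_irrefl _ hlt
  have hpSSB : payoff M S SB = v := by
    unfold payoff
    have h6 : ∀ i : Fin (b+1), SB i * M.mulVec S i = SB i * v := by
      intro i
      by_cases hi : (i:ℕ) ≤ ℓ
      · rw [hv i hi]
      · rw [hSBsupp i (by omega), zero_mul, zero_mul]
    rw [Finset.sum_congr rfl (fun i _ => h6 i), ← Finset.sum_mul, hSBsum, one_mul]
  have hvle : v ≤ payoff M SA SB := by
    have h := hAopt S ⟨hSnn, hSsum⟩
    rwa [hpSSB] at h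
  have hveq : v = payoff M SA SB := le_antisymm hvle hvge
  by_cases hall : ∀ i : Fin (b+1), payoff M SA SB ≤ M.mulVec S i
  · -- (S, SB) is a Nash equilibrium, contradicting uniqueness
    have hnash2 : IsNash M S SB := by
      refine ⟨⟨hSnn, hSsum⟩, ⟨hSBnn, hSBsum⟩, ?_, ?_⟩
      · intro T hT
        have h := hAopt T hT
        rw [hpSSB, hveq]
        exact h
      · intro T hT
        rw [hpSSB, hveq]
        calc payoff M SA SB = ∑ i, T i * payoff M SA SB := by
              rw [← Finset.sum_mul, hT.2, one_mul]
          _ ≤ ∑ i, T i * M.mulVec S i :=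
              Finset.sum_le_sum fun i _ => mul_le_mul_of_nonneg_left (hall i) (hT.1 i)
          _ = payoff M S T := rfl
    have heq2 := huniq S SB hnash2
    apply hSl
    rw [heq2]
    exact hzero ⟨ℓ, by omega⟩ (le_refl ℓ)
  · push_neg at hall
    obtain ⟨i0, hi0⟩ := hall
    have hi0l : ℓ < (i0:ℕ) := by
      by_contra hc
      push_neg at hc
      rw [hv i0 hc, hveq] at hi0
      exact lt_irrefl _ hi0
    have hlb : ℓ < b := by have := i0.isLt; omega
    have hchain : ∀ d : ℕ, ∀ h : ℓ+1+d < b+1,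
        M.mulVec S ⟨ℓ+1, by omega⟩ ≤ M.mulVec S ⟨ℓ+1+d, h⟩ := by
      intro d
      induction d with
      | zero => intro h; exact le_refl _
      | succ m ih =>
        intro h
        have h' : ℓ+1+m < b+1 := by omega
        have hs : M.mulVec S ⟨ℓ+1+m, h'⟩ < M.mulVec S ⟨ℓ+1+(m+1), h⟩ := by
          have hr := row_mono α hprec M hM S hSnn ℓ (by omega) hextS0
            (by rw [extv_mk S ℓ (by omega)]; exact hSl) (ℓ+1+(m+1)) (by omega) h
          exact hr
        exact le_trans (ih h') (le_of_lt hs)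
    have hchain' : ∀ i : Fin (b+1), ℓ + 1 ≤ (i:ℕ) →
        M.mulVec S ⟨ℓ+1, by omega⟩ ≤ M.mulVec S i := by
      intro i hi
      have hd := hchain ((i:ℕ) - ℓ - 1) (by omega)
      have he : (⟨ℓ+1+((i:ℕ)-ℓ-1), by omega⟩ : Fin (b+1)) = i := by
        apply Fin.ext
        show ℓ+1+((i:ℕ)-ℓ-1) = (i:ℕ)
        omega
      rwa [he] at hd
    have hS1 : M.mulVec S ⟨ℓ+1, by omega⟩ < payoff M SA SB :=
      lt_of_le_of_lt (hchain' i0 (by omega)) hi0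
    -- the B-strategy (0, R(S)) strictly improves on the value
    have hT1prob : IsProbVec (revS ℓ 1 S : Fin (b+1) → ℝ) :=
      ⟨revS_nonneg ℓ 1 S hSnn, revS_sum ℓ 1 S hℓa hextS0 (by omega) hSsum⟩
    have hge := hBopt _ hT1prob
    have hlt2 : payoff M SA (revS ℓ 1 S) < payoff M SA SB := by
      rw [payoff_swap]
      rw [Fin.sum_univ_succ]
      have hcol0 : (∑ i, revS ℓ 1 S i * M i 0) = M.mulVec S ⟨ℓ+1, by omega⟩ := by
        have h7 := revS_col ℓ 1 α M hM S hℓa hextS0 (by omega) 0 (by simp)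
        rw [h7]
        congr 1
      have hsum' : ∑ j : Fin a, SA (Fin.succ j) = 1 - SA 0 := by
        have h9 := hSAsum
        rw [Fin.sum_univ_succ] at h9
        linarith
      have htail : ∀ j : Fin a,
          SA (Fin.succ j) * (∑ i, revS ℓ 1 S i * M i (Fin.succ j))
            = SA (Fin.succ j) * payoff M SA SB := by
        intro j
        have hjs : ((Fin.succ j : Fin (a+1)):ℕ) = (j:ℕ) + 1 := Fin.val_succ j
        by_cases hj : SA (Fin.succ j) = 0
        · rw [hj, zero_mul, zero_mul]
        · have hjl : ((Fin.succ j : Fin (a+1)):ℕ) < ℓ := by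
            by_contra hc; exact hj (hzero _ (by omega))
          rw [revS_col ℓ 1 α M hM S hℓa hextS0 (by omega) (Fin.succ j) (by omega)]
          have h8 := hv ⟨ℓ + 1 - ((Fin.succ j : Fin (a+1)):ℕ), by omega⟩
            ((by omega : ℓ + 1 - ((Fin.succ j : Fin (a+1)):ℕ) ≤ ℓ))
          rw [h8, hveq]
      rw [Finset.sum_congr rfl (fun j _ => htail j), ← Finset.sum_mul, hsum', hcol0]
      have h0pos : 0 < SA 0 := lt_of_le_of_ne (hSAnn 0) (Ne.symm hSA0)
      nlinarith [hS1, h0pos]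
    linarith
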